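/- For every chord diagram D with n chords, the coefficient of λ^n in the polynomial W_J(D) equals Per(IM(D)), the permanent of the intersection matrix of D. -/

import Mathlib

open Finset

/-! ### Permanents -/

/-- The permanent of a square matrix. -/
noncomputable def perm {ι R : Type*} [Fintype ι] [DecidableEq ι] [CommRing R]
    (M : Matrix ι ι R) : R :=
  ∑ σ : Equiv.Perm ι, ∏ i, M i (σ i)

/-! ### Chord diagrams -/

/-- A chord diagram with `n` chords: a partition of `{1,…,2n}` into `n` two-element
subsets (chords), each recorded by its left endpoint `l i` and right endpoint `r i`,
with the chords numbered in increasing order of their left endpoints. -/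
structure ChordDiagram (n : ℕ) where
  l : Fin n → Fin (2 * n)
  r : Fin n → Fin (2 * n)
  lr : ∀ i, l i < r i
  mono : StrictMono l
  cover : ∀ q : Fin (2 * n), ∃! i : Fin n, l i = q ∨ r i = q

namespace ChordDiagram

variable {n : ℕ}

/-- Chords `i` and `j` intersect. -/
abbrev Intersect (D : ChordDiagram n) (i j : Fin n) : Prop :=
  (D.l i < D.l j ∧ D.l j < D.r i ∧ D.r i < D.r j) ∨
  (D.l j < D.l i ∧ D.l i < D.r j ∧ D.r j < D.r i)

/-- Chord `i` is completely contained in chord `j`. -/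
abbrev Contained (D : ChordDiagram n) (i j : Fin n) : Prop :=
  D.l j < D.l i ∧ D.r i < D.r j

/-- The five colors `I, B⁺₀, B⁺₁, B⁻₀, B⁻₁` (`true` encodes subscript `1`). -/
inductive JCol where
  | I : JCol
  | Bp : Bool → JCol
  | Bm : Bool → JCol
  deriving DecidableEq, Fintype

/-- The contribution `δ` of a left endpoint of a chord with a given color. -/
def lsign : JCol → ℤ
  | .Bp true => 1
  | .Bm true => -1
  | _ => 0

/-- `δ(q)` for a coloring `ρ` of the chords of `D`. -/
def delta (D : ChordDiagram n) (ρ : Fin n → JCol) (q : Fin (2 * n)) : ℤ :=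
  ∑ v : Fin n, ((if D.l v = q then lsign (ρ v) else 0) +
                (if D.r v = q then - lsign (ρ v) else 0))

/-- `Σ_{q < p} δ(q)`. -/
def kOf (D : ChordDiagram n) (ρ : Fin n → JCol) (p : Fin (2 * n)) : ℤ :=
  ∑ q ∈ univ.filter (fun q => q < p), D.delta ρ q

/-- The weight `ω_ρ(v)` of chord `v` under the coloring `ρ`. -/
noncomputable def omega (D : ChordDiagram n) (ρ : Fin n → JCol) (v : Fin n) :
    Polynomial ℚ :=
  match ρ v with
  | .I => Polynomial.X + 2
  | .Bp ε => - (-1 : Polynomial ℚ) ^ (if ε then 1 else 0) *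
      (1 + ((D.kOf ρ (D.l v) : ℤ) : Polynomial ℚ)) *
      (Polynomial.X + 1 - ((D.kOf ρ (D.r v) : ℤ) : Polynomial ℚ))
  | .Bm ε => - (-1 : Polynomial ℚ) ^ (if ε then 1 else 0) *
      (1 + ((D.kOf ρ (D.r v) : ℤ) : Polynomial ℚ)) *
      (Polynomial.X + 1 - ((D.kOf ρ (D.l v) : ℤ) : Polynomial ℚ))

/-- The colored Jones weight system `W_J(D) ∈ ℚ[λ]` (with `λ = X`). -/
noncomputable def WJ (D : ChordDiagram n) : Polynomial ℚ :=
  ∑ ρ : Fin n → JCol, ∏ v : Fin n, D.omega ρ v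

/-- The intersection matrix `IM(D)` with entries `sign(i−j)` for intersecting chords. -/
def IM (D : ChordDiagram n) : Matrix (Fin n) (Fin n) ℚ := fun i j =>
  if D.Intersect i j then (if j < i then 1 else if i < j then -1 else 0) else 0

/-- The `3×3` block `A₀`. -/
noncomputable def A0 : Matrix (Fin 3) (Fin 3) (Polynomial ℚ) :=
  !![Polynomial.X + 2, 0, 0; 0, Polynomial.X + 2, 1; Polynomial.X, -Polynomial.X - 2, 1]

/-- The `3×3` block `A₊`. -/
noncomputable def Aplus : Matrix (Fin 3) (Fin 3) (Polynomial ℚ) := !![1, 1, 0; 0, 0, 0; 0, 0, 0]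

/-- The `3×3` block `A₋`. -/
noncomputable def Aminus : Matrix (Fin 3) (Fin 3) (Polynomial ℚ) := !![0, 0, 0; -1, -1, 0; 0, 0, 0]

/-- The `3×3` block `A_c`. -/
noncomputable def Acont : Matrix (Fin 3) (Fin 3) (Polynomial ℚ) := !![1, 1, 0; -1, -1, 0; 0, 0, 0]

/-- The blown-up intersection matrix `IM_J(D)`, a `3n×3n` matrix of `3×3` blocks. -/
noncomputable def IMJ (D : ChordDiagram n) :
    Matrix (Fin n × Fin 3) (Fin n × Fin 3) (Polynomial ℚ) := fun p q =>
  (if p.1 = q.1 then A0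
   else if q.1 < p.1 ∧ D.Intersect p.1 q.1 then Aplus
   else if p.1 < q.1 ∧ D.Intersect p.1 q.1 then Aminus
   else if ¬ D.Intersect p.1 q.1 ∧ D.Contained p.1 q.1 then Acont
   else 0) p.2 q.2

end ChordDiagram

/-! ### Looped digraphs -/

/-- A looped digraph: a finite digraph (arcs a set of ordered pairs) with a loop at
every vertex and a distinguished set of red non-loop arcs. -/
structure LoopedDigraph (V : Type*) [Fintype V] [DecidableEq V] where
  arcs : Finset (V × V)
  red : Finset (V × V)
  loop_mem : ∀ v : V, (v, v) ∈ arcs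
  red_sub : red ⊆ arcs
  red_no_loop : ∀ v : V, (v, v) ∉ red

/-- A thickened arc `(e, b)`, where `e` is an arc of the digraph and `b : Bool` records:
for an uncolored arc, whether it is thickened at its tail (`true`) or head (`false`);
for a red arc (always thickened at its tail `e.1`), whether it keeps its original
orientation (`true`) or is reversed (`false`). Loops always carry `b = true`. -/
abbrev TArc (V : Type*) := (V × V) × Bool

variable {V : Type*} [Fintype V] [DecidableEq V]

/-- The degree of `v` in a collection `K` of thickened arcs: the number of arc-ends of
`K` at `v` (a loop contributing `2`). -/
def degAt (K : Finset (TArc V)) (v : V) : ℕ :=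
  ∑ t ∈ K, ((if t.1.1 = v then 1 else 0) + (if t.1.2 = v then 1 else 0))

/-- `deg₄(K)`: the number of vertices of degree `4` in `K`. -/
def deg4 (K : Finset (TArc V)) : ℕ := (univ.filter fun v => degAt K v = 4).card

namespace LoopedDigraph

variable (G : LoopedDigraph V)

/-- The initial vertex of a thickened arc, as oriented in the collection. -/
def src (t : TArc V) : V := if t.1 ∈ G.red ∧ t.2 = false then t.1.2 else t.1.1

/-- The terminal vertex of a thickened arc, as oriented in the collection. -/
def dst (t : TArc V) : V := if t.1 ∈ G.red ∧ t.2 = false then t.1.1 else t.1.2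

/-- The vertex at which a thickened arc is thickened. -/
def tvert (t : TArc V) : V := if t.1 ∈ G.red then t.1.1 else if t.2 then t.1.1 else t.1.2

/-- The number of arcs of `K` thickened at `v`. -/
def thickAt (K : Finset (TArc V)) (v : V) : ℕ := (K.filter fun t => G.tvert t = v).card

/-- The number of arcs of `K` thickened at `v` that leave `v` (a loop counting as
leaving). -/
def outThickAt (K : Finset (TArc V)) (v : V) : ℕ :=
  (K.filter fun t => G.tvert t = v ∧ G.src t = v).card

/-- An acceptable object for a looped digraph. -/
structure IsAcceptable (K : Finset (TArc V)) : Prop where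
  mem_arcs : ∀ t ∈ K, t.1 ∈ G.arcs
  loop_thick : ∀ t ∈ K, t.1.1 = t.1.2 → t.2 = true
  deg024 : ∀ v, degAt K v = 0 ∨ degAt K v = 2 ∨ degAt K v = 4
  half_thick : ∀ v, 2 * G.thickAt K v = degAt K v
  balance : ∀ v, G.thickAt K v = 2 → G.outThickAt K v = 1

/-- `a(K)`: the number of arcs of `K` thickened at their initial vertex (loops count). -/
def aK (K : Finset (TArc V)) : ℕ := (K.filter fun t => G.src t = G.tvert t).card

open Classical in
/-- The partition function `J(G)`, with `λ ↦ lam` and `x_e ↦ x e`. -/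
noncomputable def J {R : Type*} [CommRing R] (lam : R) (x : V × V → R) : R :=
  ∑ K : Finset (TArc V),
    if G.IsAcceptable K then
      2 ^ deg4 K * (lam + 2) ^ (Fintype.card V - deg4 K) *
        (∏ t ∈ K, x t.1) * (-1 : R) ^ G.aK K
    else 0

/-- `s(w) = δ_w · ε_w` for a partial coloring `c` (with support the set `V′`). -/
def sInt (c : V → Option (Bool × Bool)) (w : V) : ℤ :=
  match c w with
  | none => 0
  | some (δ, ε) => (if δ then 1 else -1) * (if ε then 1 else 0)

/-- `z_v(e)` (for `bar = false`) and `z̄_v(e)` (for `bar = true`). -/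
def zfun {R : Type*} [CommRing R] (x : V × V → R) (c : V → Option (Bool × Bool))
    (bar : Bool) (v : V) (e : V × V) : R :=
  match c v with
  | none => 0
  | some (δ, _) =>
    if e ∈ G.red then
      (if e.1 = v then ((sInt c e.2 : ℤ) : R) * x e else 0)
    else if e.1 = v then (if δ = bar then ((sInt c e.2 : ℤ) : R) * x e else 0)
    else if e.2 = v then (if δ ≠ bar then ((sInt c e.1 : ℤ) : R) * x e else 0)
    else 0

/-- The weight `ω′_c(v)`. -/
noncomputable def omegaC {R : Type*} [CommRing R] (lam : R) (x : V × V → R)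
    (c : V → Option (Bool × Bool)) (v : V) : R :=
  match c v with
  | none => 0
  | some (_, ε) =>
    - (-1 : R) ^ (if ε then 1 else 0) *
      (1 + ∑ e ∈ G.arcs, G.zfun x c false v e) *
      (lam + 1 - ∑ e ∈ G.arcs, G.zfun x c true v e)

/-- The state sum `J′(G)`: the sum over `V′ ⊆ V` and colorings `c` of `V′` is encoded
as a sum over partial colorings `c : V → Option (Bool × Bool)` with support `V′`. -/
noncomputable def J' {R : Type*} [CommRing R] (lam : R) (x : V × V → R) : R :=
  ∑ c : V → Option (Bool × Bool),
    (lam + 2) ^ (univ.filter fun v => c v = none).card *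
      ∏ v ∈ univ.filter (fun v => (c v).isSome = true), G.omegaC lam x c v

end LoopedDigraph

/-! ### The labeled intersection digraph of a chord diagram -/

open ChordDiagram in
/-- The labeled intersection digraph `LID(D)` of a chord diagram `D`. -/
def LID {n : ℕ} (D : ChordDiagram n) : LoopedDigraph (Fin n) where
  arcs := univ.filter fun p : Fin n × Fin n =>
    p.1 = p.2 ∨ (p.1 < p.2 ∧ D.Intersect p.1 p.2) ∨ D.Contained p.1 p.2
  red := univ.filter fun p : Fin n × Fin n => D.Contained p.1 p.2
  loop_mem := by intro v; simp
  red_sub := by intro p hp; simp only [mem_filter, mem_univ, true_and] at hp ⊢; tauto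
  red_no_loop := by
    intro v hv
    simp only [mem_filter, mem_univ, true_and] at hv
    exact lt_irrefl _ hv.1

/-! ### The data `(V′, h)` and the state sum `A(V′, h)` -/

/-- The data of a function `h` assigning to every `v ∈ V′` a set of at most two arcs of
`G` incident with `v`, every red arc of `h v` leaving `v` (and `h v = ∅` off `V′`). -/
structure HData (G : LoopedDigraph V) (V' : Finset V) where
  h : V → Finset (V × V)
  sub : ∀ v, h v ⊆ G.arcs
  card_le : ∀ v, (h v).card ≤ 2
  incident : ∀ v, ∀ e ∈ h v, e.1 = v ∨ e.2 = v
  red_out : ∀ v, ∀ e ∈ h v, e ∈ G.red → e.1 = v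
  outside : ∀ v, v ∉ V' → h v = ∅

/-- The number of arc-ends at `v` among a set of thickened arcs `(e, w)`. -/
def endCountAt (S : Finset ((V × V) × V)) (v : V) : ℕ :=
  ∑ p ∈ S, ((if p.1.1 = v then 1 else 0) + (if p.1.2 = v then 1 else 0))

namespace HData

variable {G : LoopedDigraph V} {V' : Finset V} (H : HData G V')

/-- `W₁ = {v ∈ V′ : |h(v)| = 2}`. -/
def W1 : Finset V := V'.filter fun v => (H.h v).card = 2

/-- `W₂ = {v ∈ V′ : |h(v)| ≥ 1}`. -/
def W2 : Finset V := V'.filter fun v => 1 ≤ (H.h v).card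

/-- `h(W₂)`: the set of thickened arcs `(e, v)` with `v ∈ W₂` and `e ∈ h v`. -/
def hW2 : Finset ((V × V) × V) :=
  univ.filter fun p => p.2 ∈ H.W2 ∧ p.1 ∈ H.h p.2

/-- The functions `g` on `S` with `g v ∈ h v`, encoded as singleton-valued selections
`gs : V → Finset (V × V)` (with `gs v = ∅` off `S`). -/
def choices (S : Finset V) : Finset (V → Finset (V × V)) :=
  univ.filter fun gs => ∀ v, gs v ⊆ H.h v ∧
    (v ∈ S → (gs v).card = 1) ∧ (v ∉ S → gs v = ∅)

/-- The summand `B(c, V₂′, g)`; here `g` is encoded by the selection `gs` on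
`W₁ ∪ V₂′` and the complementary function `f` (on `W₁ ∪ V₁′`, `V₁′ = W₂∖(W₁∪V₂′)`)
is encoded by the complementary selection `h v ∖ gs v`. -/
noncomputable def Bterm {R : Type*} [CommRing R] (lam : R) (x : V × V → R)
    (c : V → Option (Bool × Bool)) (V2 : Finset V) (gs : V → Finset (V × V)) : R :=
  (-1 : R) ^ (∑ v ∈ V', ((c v).elim 0 fun p => if p.2 then 1 else 0 : ℕ)) *
  (-1 : R) ^ (H.W1 ∪ V2).card *
  (lam + 1) ^ (V' \ (H.W1 ∪ V2)).card *
  (∏ v ∈ H.W1 ∪ V2, ∏ e ∈ gs v, G.zfun x c true v e) *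
  (∏ v ∈ H.W1 ∪ (H.W2 \ (H.W1 ∪ V2)), ∏ e ∈ H.h v \ gs v, G.zfun x c false v e)

open Classical in
/-- The state sum `A(V′, h)`. -/
noncomputable def Aval {R : Type*} [CommRing R] (lam : R) (x : V × V → R) : R :=
  ∑ c : V → Option (Bool × Bool),
    if (∀ v, (c v).isSome = true ↔ v ∈ V') then
      ∑ V2 ∈ (H.W2 \ H.W1).powerset, ∑ gs ∈ H.choices (H.W1 ∪ V2),
        H.Bterm lam x c V2 gs
    else 0

end HData

/-! ### Good collections and the state sum `C(X, V′, K)` -/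

namespace LoopedDigraph

/-- A collection of thickened arcs good on `V′`. -/
structure IsGood (G : LoopedDigraph V) (V' : Finset V) (K : Finset (TArc V)) : Prop where
  mem_arcs : ∀ t ∈ K, t.1 ∈ G.arcs
  loop_thick : ∀ t ∈ K, t.1.1 = t.1.2 → t.2 = true
  red_orig : ∀ t ∈ K, t.1 ∈ G.red → t.2 = true
  deg_mem : ∀ v ∈ V', degAt K v = 2 ∨ degAt K v = 4
  deg_out : ∀ v, v ∉ V' → degAt K v = 0
  half_thick : ∀ v, 2 * G.thickAt K v = degAt K v
  unc_opp : ∀ t ∈ K, ∀ s ∈ K, t ≠ s → t.1 ∉ G.red → s.1 ∉ G.red →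
    G.tvert t = G.tvert s → ((G.src t = G.tvert t) ↔ ¬ (G.src s = G.tvert s))

/-- The set `W₁` of degree-4 vertices of a collection `K`. -/
def KW1 (G : LoopedDigraph V) (K : Finset (TArc V)) : Finset V :=
  univ.filter fun v => degAt K v = 4

/-- The arcs of `K` thickened at `v`. -/
def thickedAt (G : LoopedDigraph V) (K : Finset (TArc V)) (v : V) : Finset (TArc V) :=
  K.filter fun t => G.tvert t = v

/-- The functions `g′` assigning to each degree-4 vertex one of the two arcs of `K`
thickened at it, encoded as singleton-valued selections. -/
def kchoices (G : LoopedDigraph V) (K : Finset (TArc V)) : Finset (V → Finset (TArc V)) :=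
  univ.filter fun cs => ∀ v, cs v ⊆ G.thickedAt K v ∧
    (v ∈ KW1 G K → (cs v).card = 1) ∧ (v ∉ KW1 G K → cs v = ∅)

open Classical in
/-- The state sum `C(X, V′, K)`. -/
noncomputable def Cval {R : Type*} [CommRing R] (G : LoopedDigraph V) (V' : Finset V)
    (K : Finset (TArc V)) (X : Finset V) (x : V × V → R) : R :=
  ∑ cs ∈ kchoices G K,
    (-1 : R) ^ (KW1 G K).card * (-1 : R) ^ X.card *
    ∑ c : V → Option (Bool × Bool),
      if (∀ v, (c v).isSome = true ↔ v ∈ V') then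
        (∏ v ∈ KW1 G K ∪ X,
          ∏ t ∈ (if v ∈ KW1 G K then cs v else G.thickedAt K v), G.zfun x c true v t.1) *
        (∏ v ∈ V' \ X, ∏ t ∈ G.thickedAt K v \ cs v, G.zfun x c false v t.1)
      else 0

/-- A connected acceptable object: one with no single loops. -/
def IsConnectedObj (G : LoopedDigraph V) (K : Finset (TArc V)) : Prop :=
  G.IsAcceptable K ∧ ∀ t ∈ K, t.1.1 = t.1.2 → degAt K t.1.1 ≠ 2

/-- A super acceptable object: connected, and every vertex has degree at least 2. -/
def IsSuper (G : LoopedDigraph V) (K : Finset (TArc V)) : Prop :=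
  G.IsConnectedObj K ∧ ∀ v, 2 ≤ degAt K v

end LoopedDigraph

/-! Every weight `ω_ρ(v)` is linear in `λ`, with `λ`-coefficient of the shape
`a(ρ v) + Σ_u b_{vu}(ρ v) · t(ρ u)`: here `t(s)` is the sign a chord of colour `s` puts at
its left endpoint, and `b_{vu}(s) = ±1` exactly when the endpoint of `v` read by `s` lies
inside chord `u`. Expanding the product over the chords gives a sum over maps `f` from chords
to `Option` chords, and summing over the colourings chord by chord factorises each term.
Both `a` and every `b_{vu}` sum to zero over the five colours, so a term vanishes as soon as
some chord is not hit by `f`; the surviving `f` are permutations, and for them the factor of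
chord `v` is `Σ_s b_{v,f v}(s) t(s) = IM(D)_{v, f v}`. -/

section PermanentExpansion

variable {ι : Type*} [Fintype ι]

lemma exists_perm_of_forall_exists_eq_some {f : ι → Option ι}
    (hf : ∀ u, ∃ v, f v = some u) : ∃ σ : Equiv.Perm ι, ∀ v, f v = some (σ v) := by
  have hsurj : Function.Surjective fun v => (f v).getD v := fun u => by
    obtain ⟨v, hv⟩ := hf u
    exact ⟨v, by simp [hv]⟩
  have hinj := Finite.injective_iff_surjective.mpr hsurj
  refine ⟨Equiv.ofBijective _ ⟨hinj, hsurj⟩, fun v =>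
    (Option.getD_of_ne_none (fun hv => ?_) v).symm⟩
  -- if `f v = none`, then `v` is the image under `getD` of both `v` and the `w` with `f w = some v`
  obtain ⟨w, hw⟩ := hf v
  have hwv : w = v := hinj (by simp [hw, hv])
  simp [hwv, hv] at hw

lemma prod_option_elim_eq_prod_pow {κ M : Type*} [Fintype κ] [DecidableEq κ] [CommMonoid M]
    (f : ι → Option κ) (g : κ → M) :
    ∏ v, (f v).elim 1 g = ∏ u, g u ^ #{v | f v = some u} := by
  rw [← Finset.prod_fiberwise' univ f fun j => j.elim 1 g, Fintype.prod_option]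
  simp only [prod_const, Option.elim_none, one_pow, one_mul, Option.elim_some]

variable [DecidableEq ι]

theorem sum_prod_add_sum_mul_eq_perm {α R : Type*} [Fintype α] [CommRing R]
    (a : ι → α → R) (b : ι → ι → α → R) (t : α → R)
    (ha : ∀ v, ∑ s, a v s = 0) (hb : ∀ v u, ∑ s, b v u s = 0) :
    ∑ ρ : ι → α, ∏ v, (a v (ρ v) + ∑ u, b v u (ρ v) * t (ρ u)) =
      perm (fun v u => ∑ s, b v u s * t s) := by
  set c : ι → Option ι → α → R := fun v j => j.elim (a v) (b v)
  have hexpand : ∀ ρ : ι → α, ∏ v, (a v (ρ v) + ∑ u, b v u (ρ v) * t (ρ u)) =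
      ∑ f : ι → Option ι, ∏ u, c u (f u) (ρ u) * t (ρ u) ^ #{v | f v = some u} := by
    intro ρ
    have hv : ∀ v, a v (ρ v) + ∑ u, b v u (ρ v) * t (ρ u) =
        ∑ j : Option ι, c v j (ρ v) * j.elim 1 (t ∘ ρ) := fun v => by
      simp [c, Fintype.sum_option]
    simp_rw [hv, Fintype.prod_sum, prod_mul_distrib, prod_option_elim_eq_prod_pow]
    rfl
  calc _ = ∑ f : ι → Option ι, ∏ u, ∑ s, c u (f u) s * t s ^ #{v | f v = some u} := by
        simp_rw [hexpand, Fintype.prod_sum]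
        exact Finset.sum_comm
    _ = ∑ σ : Equiv.Perm ι, ∏ u, ∑ s, b u (σ u) s * t s := by
        refine (Fintype.sum_of_injective (fun σ v => some (σ v)) ?_ _ _ ?_ fun σ => ?_).symm
        · intro σ τ h
          exact Equiv.ext fun v => Option.some_injective _ (congrFun h v)
        · intro f hf
          obtain ⟨u, hu⟩ : ∃ u, ∀ v, f v ≠ some u := by
            by_contra! h
            obtain ⟨σ, hσ⟩ := exists_perm_of_forall_exists_eq_some h
            exact hf ⟨σ, funext fun v => (hσ v).symm⟩
          refine prod_eq_zero (mem_univ u) ?_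
          rw [filter_false_of_mem fun v _ => hu v, card_empty]
          cases f u <;> simp [c, ha, hb]
        · refine prod_congr rfl fun u _ => ?_
          have hfiber : #{v | σ v = u} = 1 := by
            rw [card_eq_one]
            exact ⟨σ.symm u, by ext v; simp [Equiv.eq_symm_apply]⟩
          simp [c, hfiber]

end PermanentExpansion

namespace ChordDiagram

open Polynomial

variable {n : ℕ} (D : ChordDiagram n)

lemma r_injective : Function.Injective D.r := fun u v h => by
  obtain ⟨i, -, hi⟩ := D.cover (D.r v)
  exact (hi u (Or.inr h)).trans (hi v (Or.inr rfl)).symm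

lemma l_ne_r (u v : Fin n) : D.l u ≠ D.r v := by
  intro h
  obtain ⟨i, -, hi⟩ := D.cover (D.r v)
  obtain rfl : u = v := (hi u (Or.inl h)).trans (hi v (Or.inr rfl)).symm
  exact (D.lr u).ne h

lemma kOf_eq_sum (ρ : Fin n → JCol) (p : Fin (2 * n)) :
    D.kOf ρ p = ∑ u, ((if D.l u < p ∧ p < D.r u then lsign (ρ u) else 0) +
      if D.r u = p then lsign (ρ u) else 0) := by
  simp only [kOf, delta]
  rw [Finset.sum_comm]
  refine sum_congr rfl fun u _ => ?_
  rw [sum_add_distrib, sum_ite_eq, sum_ite_eq]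
  simp only [mem_filter, mem_univ, true_and]
  have := D.lr u
  split_ifs <;> grind

lemma kOf_l_eq_sum (ρ : Fin n → JCol) (v : Fin n) :
    D.kOf ρ (D.l v) = ∑ u, if D.l u < D.l v ∧ D.l v < D.r u then lsign (ρ u) else 0 := by
  simp [kOf_eq_sum, (D.l_ne_r v _).symm]

lemma kOf_r_eq_sum (ρ : Fin n → JCol) (v : Fin n) :
    D.kOf ρ (D.r v) =
      lsign (ρ v) + ∑ u, if D.l u < D.r v ∧ D.r v < D.r u then lsign (ρ u) else 0 := by
  simp [kOf_eq_sum, sum_add_distrib, D.r_injective.eq_iff, add_comm]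

def bsign : Bool → ℚ
  | false => -1
  | true => 1

def omegaCoeff (ρ : Fin n → JCol) (v : Fin n) : ℚ :=
  match ρ v with
  | .I => 1
  | .Bp ε => bsign ε * (1 + D.kOf ρ (D.l v))
  | .Bm ε => bsign ε * (1 + D.kOf ρ (D.r v))

lemma omega_eq_C_mul (ρ : Fin n → JCol) (v : Fin n) :
    ∃ β : ℚ, D.omega ρ v = C (D.omegaCoeff ρ v) * (X + C β) := by
  have hsign : ∀ ε : Bool, -(-1 : ℚ[X]) ^ (if ε then 1 else 0) = C (bsign ε) := by
    rintro (_ | _) <;> simp [bsign]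
  unfold omega omegaCoeff
  split
  · exact ⟨2, by simp [C_ofNat]⟩
  · refine ⟨1 - D.kOf ρ (D.r v), ?_⟩
    rw [hsign]
    simp only [map_mul, map_add, map_sub, map_one, map_intCast]
    ring
  · refine ⟨1 - D.kOf ρ (D.l v), ?_⟩
    rw [hsign]
    simp only [map_mul, map_add, map_sub, map_one, map_intCast]
    ring

lemma coeff_WJ_eq_sum_prod_omegaCoeff :
    D.WJ.coeff n = ∑ ρ : Fin n → JCol, ∏ v, D.omegaCoeff ρ v := by
  rw [WJ, finsetSum_coeff]
  refine sum_congr rfl fun ρ _ => ?_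
  have hlin : ∀ v,
      (D.omega ρ v).natDegree ≤ 1 ∧ (D.omega ρ v).coeff 1 = D.omegaCoeff ρ v := by
    intro v
    obtain ⟨β, hβ⟩ := D.omega_eq_C_mul ρ v
    rw [hβ]
    exact ⟨(natDegree_C_mul_le _ _).trans (natDegree_X_add_C β).le, by simp⟩
  have := coeff_prod_of_natDegree_le (s := univ) (D.omega ρ) 1 fun v _ => (hlin v).1
  simpa [(hlin _).2] using this

lemma JCol.sum_univ {M : Type*} [AddCommMonoid M] (g : JCol → M) :
    ∑ s, g s = g .I + (g (.Bp false) + g (.Bp true)) + (g (.Bm false) + g (.Bm true)) := by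
  rw [show (univ : Finset JCol) = {.I, .Bp false, .Bp true, .Bm false, .Bm true} by decide]
  rw [sum_insert (by decide), sum_insert (by decide), sum_insert (by decide),
    sum_insert (by decide), sum_singleton]
  abel

/-- A chord always covers its own right endpoint, so its own term in `k′_v` is moved from the
cross weight into the base weight; this makes both weights sum to zero over the colours. -/
def baseWeight : JCol → ℚ
  | .I => 1
  | .Bp ε => bsign ε
  | .Bm ε => bsign ε * (1 + lsign (.Bm ε))

def crossWeight (v u : Fin n) : JCol → ℚ
  | .I => 0
  | .Bp ε => if D.l u < D.l v ∧ D.l v < D.r u then bsign ε else 0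
  | .Bm ε => if D.l u < D.r v ∧ D.r v < D.r u then bsign ε else 0

lemma sum_baseWeight : ∑ s, baseWeight s = 0 := by
  simp [JCol.sum_univ, baseWeight, bsign, lsign]

lemma sum_crossWeight (v u : Fin n) : ∑ s, D.crossWeight v u s = 0 := by
  simp only [JCol.sum_univ, crossWeight, bsign]
  split_ifs <;> norm_num

lemma omegaCoeff_eq (ρ : Fin n → JCol) (v : Fin n) :
    D.omegaCoeff ρ v = baseWeight (ρ v) + ∑ u, D.crossWeight v u (ρ v) * lsign (ρ u) := by
  unfold omegaCoeff
  split <;> rename_i s hs <;> rw [hs]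
  · simp [baseWeight, crossWeight]
  · simp only [kOf_l_eq_sum, baseWeight, crossWeight, ite_mul, zero_mul]
    push_cast
    simp only [mul_add, mul_one, mul_sum, mul_ite, mul_zero]
  · simp only [kOf_r_eq_sum, baseWeight, crossWeight, ite_mul, zero_mul]
    push_cast
    simp only [mul_add, mul_one, mul_sum, mul_ite, mul_zero, add_assoc, hs]

lemma sum_crossWeight_mul_lsign (v u : Fin n) :
    ∑ s, D.crossWeight v u s * lsign s = D.IM v u := by
  have hv := D.lr v
  have hu := D.lr u
  have hlt : u < v ↔ D.l u < D.l v := D.mono.lt_iff_lt.symm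
  have hgt : v < u ↔ D.l v < D.l u := D.mono.lt_iff_lt.symm
  have h1 := D.l_ne_r u v
  have h2 := D.l_ne_r v u
  by_cases huv : u = v
  · subst huv
    simp [JCol.sum_univ, crossWeight, IM, Intersect, lsign]
  have hll : D.l u ≠ D.l v := D.mono.injective.ne huv
  have hrr : D.r u ≠ D.r v := D.r_injective.ne huv
  simp only [JCol.sum_univ, crossWeight, IM, Intersect, bsign, lsign, hlt, hgt]
  split_ifs <;>
    first | (norm_num; done) | (simp only [Fin.lt_def, ne_eq, Fin.ext_iff] at *; omega)

end ChordDiagram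

/-- **Corollary (BG).** For every chord diagram `D` with `n` chords, the coefficient of
`λ^n` in `W_J(D)` equals the permanent of the intersection matrix: `W_{JJ} = Per(IM)`. -/
theorem coeff_WJ_eq_perm_IM {n : ℕ} (D : ChordDiagram n) :
    D.WJ.coeff n = perm (ChordDiagram.IM D) := by
  rw [D.coeff_WJ_eq_sum_prod_omegaCoeff]
  simp_rw [D.omegaCoeff_eq]
  rw [sum_prod_add_sum_mul_eq_perm _ _ (fun s => (ChordDiagram.lsign s : ℚ))
    (fun _ => ChordDiagram.sum_baseWeight) D.sum_crossWeight]
  simp only [D.sum_crossWeight_mul_lsign]
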